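/- In the Roy model with prohibitive cost of treatment reversal, where D1(0) = 1{Y1(1) ≥ Y1(0)}, D0 = 1{Y0(1) − Y0(0) + β·min{Y1(1) − Y1(0), 0} ≥ 0} with β ∈ (0,1], D1 = 1 if D0 = 1, binary outcomes Yt(d) ∈ {0,1}, and P(D0 = D1 = 0) > 0 and P(D0 < D1) > 0: the full parallel trends condition holds if and only if (1) E[Y0(0)] = E[Y1(0)] and (2) P(Y0(0) = Y1(0) = 1 | D0·D1 = 0) = 1. -/

import Mathlib

/-!
Write `Δ = Y1(0) - Y0(0)` for the untreated trend. A never-treated unit has `Y1(1) < Y1(0)`, so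
`Y1(0) = 1` and `Δ ≥ 0`. A switcher has `Y1(1) ≥ Y1(0)`, so it loses no option value by waiting
and stayed out at period 0 only because `Y0(1) < Y0(0)`; hence `Y0(0) = 1` and `Δ ≤ 0`. A mean
trend common to both groups is therefore `0`, which forces `Δ = 0`, i.e. `Y0(0) = Y1(0) = 1`,
almost surely on both groups. The always-treated then carry all of `E[Δ]`, so their mean trend
vanishes exactly when `E[Y0(0)] = E[Y1(0)]`.
-/

open MeasureTheory ProbabilityTheory

/-- Conditional expectation of a real random variable `Y` given the event `A`. -/
noncomputable def cexp {Ω : Type*} {mΩ : MeasurableSpace Ω} (μ : Measure Ω) (A : Set Ω)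
    (Y : Ω → ℝ) : ℝ := ∫ ω, Y ω ∂(@ProbabilityTheory.cond Ω mΩ μ A)

section ConditionalMean

variable {Ω : Type*} [MeasurableSpace Ω] {μ : Measure Ω} {A : Set Ω} {f : Ω → ℝ}

theorem cexp_eq_inv_mul_setIntegral (μ : Measure Ω) (A : Set Ω) (f : Ω → ℝ) :
    cexp μ A f = (μ A).toReal⁻¹ * ∫ ω in A, f ω ∂μ := by
  rw [cexp, ProbabilityTheory.cond, integral_smul_measure, ENNReal.toReal_inv, smul_eq_mul]

theorem cexp_nonneg (hA : MeasurableSet A) (hf : ∀ ω ∈ A, 0 ≤ f ω) : 0 ≤ cexp μ A f :=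
  integral_nonneg_of_ae (ae_cond_of_forall_mem hA hf)

theorem cexp_nonpos (hA : MeasurableSet A) (hf : ∀ ω ∈ A, f ω ≤ 0) : cexp μ A f ≤ 0 :=
  integral_nonpos_of_ae (ae_cond_of_forall_mem hA hf)

theorem cexp_eq_zero_iff [IsFiniteMeasure μ] :
    cexp μ A f = 0 ↔ ∫ ω in A, f ω ∂μ = 0 := by
  rcases eq_or_ne (μ A) 0 with hA | hA
  · simp [cexp_eq_inv_mul_setIntegral, hA, Measure.restrict_eq_zero.2 hA]
  · simp [cexp_eq_inv_mul_setIntegral, ENNReal.toReal_eq_zero_iff, hA, measure_ne_top]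

theorem setIntegral_eq_zero_iff_of_nonneg (hA : MeasurableSet A) (hf : ∀ ω ∈ A, 0 ≤ f ω)
    (hfi : IntegrableOn f A μ) : ∫ ω in A, f ω ∂μ = 0 ↔ f =ᵐ[μ.restrict A] 0 :=
  setIntegral_eq_zero_iff_of_nonneg_ae ((ae_restrict_iff' hA).2 (ae_of_all μ hf)) hfi

theorem setIntegral_eq_zero_iff_of_nonpos (hA : MeasurableSet A) (hf : ∀ ω ∈ A, f ω ≤ 0)
    (hfi : IntegrableOn f A μ) : ∫ ω in A, f ω ∂μ = 0 ↔ f =ᵐ[μ.restrict A] 0 := by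
  simpa [integral_neg, Filter.EventuallyEq] using
    setIntegral_eq_zero_iff_of_nonneg hA (fun ω hω => neg_nonneg.2 (hf ω hω)) hfi.neg

theorem cond_eq_one_iff_ae_restrict [IsFiniteMeasure μ] {S : Set Ω} (hA : μ A ≠ 0)
    (hS : MeasurableSet S) : μ[S|A] = 1 ↔ ∀ᵐ ω ∂μ.restrict A, ω ∈ S := by
  have := cond_isProbabilityMeasure (μ := μ) hA
  rw [← mem_ae_iff_prob_eq_one hS, ProbabilityTheory.cond]
  simp [mem_ae_iff, ae_iff, measure_ne_top, Set.compl_def]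

theorem integrable_of_forall_eq_zero_or_eq_one [IsFiniteMeasure μ] (hf : Measurable f)
    (h01 : ∀ ω, f ω = 0 ∨ f ω = 1) : Integrable f μ :=
  Integrable.of_bound hf.aestronglyMeasurable 1
    (ae_of_all μ fun ω => by rcases h01 ω with h | h <;> simp [h])

theorem setIntegral_eq_zero_on_partition_iff {N S T : Set Ω} (hf : Integrable f μ)
    (hN : MeasurableSet N) (hS : MeasurableSet S) (hNS : Disjoint N S) (hT : (N ∪ S)ᶜ = T)
    (hfN : ∀ ω ∈ N, 0 ≤ f ω) (hfS : ∀ ω ∈ S, f ω ≤ 0) :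
    (∫ ω in N, f ω ∂μ = 0 ∧ ∫ ω in S, f ω ∂μ = 0 ∧ ∫ ω in T, f ω ∂μ = 0) ↔
      f =ᵐ[μ.restrict (N ∪ S)] 0 ∧ ∫ ω, f ω ∂μ = 0 := by
  have hsplit :
      ∫ ω, f ω ∂μ = ∫ ω in N, f ω ∂μ + ∫ ω in S, f ω ∂μ + ∫ ω in T, f ω ∂μ := by
    rw [← hT, ← setIntegral_union hNS hS hf.integrableOn hf.integrableOn,
      integral_add_compl (hN.union hS) hf]
  rw [Filter.EventuallyEq, ae_restrict_union_iff, ← Filter.EventuallyEq, ← Filter.EventuallyEq,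
    ← setIntegral_eq_zero_iff_of_nonneg hN hfN hf.integrableOn,
    ← setIntegral_eq_zero_iff_of_nonpos hS hfS hf.integrableOn, hsplit]
  constructor
  · rintro ⟨hN0, hS0, hT0⟩
    exact ⟨⟨hN0, hS0⟩, by rw [hN0, hS0, hT0]; norm_num⟩
  · rintro ⟨⟨hN0, hS0⟩, htot⟩
    exact ⟨hN0, hS0, by linarith⟩

end ConditionalMean

section ParallelTrends

variable {Ω : Type*} [MeasurableSpace Ω] {μ : Measure Ω} {D0 D1 : Ω → ℕ} {f : Ω → ℝ}

def treatmentCell (D0 D1 : Ω → ℕ) (d0 d1 : ℕ) : Set Ω := {ω | D0 ω = d0 ∧ D1 ω = d1}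

def FullParallelTrends (μ : Measure Ω) (D0 D1 : Ω → ℕ) (f : Ω → ℝ) : Prop :=
  ∃ τ : ℝ, ∀ d0 d1 : ℕ, d0 ≤ 1 → d1 ≤ 1 → 0 < μ (treatmentCell D0 D1 d0 d1) →
    cexp μ (treatmentCell D0 D1 d0 d1) f = τ

theorem fullParallelTrends_iff_forall_setIntegral_eq_zero [IsFiniteMeasure μ]
    (hN : MeasurableSet (treatmentCell D0 D1 0 0)) (hS : MeasurableSet (treatmentCell D0 D1 0 1))
    (hN0 : 0 < μ (treatmentCell D0 D1 0 0)) (hS0 : 0 < μ (treatmentCell D0 D1 0 1))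
    (hfN : ∀ ω ∈ treatmentCell D0 D1 0 0, 0 ≤ f ω)
    (hfS : ∀ ω ∈ treatmentCell D0 D1 0 1, f ω ≤ 0) :
    FullParallelTrends μ D0 D1 f ↔
      ∀ d0 d1 : ℕ, d0 ≤ 1 → d1 ≤ 1 →
        ∫ ω in treatmentCell D0 D1 d0 d1, f ω ∂μ = 0 := by
  constructor
  · rintro ⟨τ, hτ⟩ d0 d1 h0 h1
    have hτ0 : τ = 0 := le_antisymm (hτ 0 1 zero_le_one le_rfl hS0 ▸ cexp_nonpos hS hfS)
      (hτ 0 0 zero_le_one zero_le_one hN0 ▸ cexp_nonneg hN hfN)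
    rcases eq_zero_or_pos (μ (treatmentCell D0 D1 d0 d1)) with hA | hA
    · simp [Measure.restrict_eq_zero.2 hA]
    · exact cexp_eq_zero_iff.1 (hτ0 ▸ hτ d0 d1 h0 h1 hA)
  · exact fun h => ⟨0, fun d0 d1 h0 h1 _ => cexp_eq_zero_iff.2 (h d0 d1 h0 h1)⟩

theorem forall_setIntegral_treatmentCell_eq_zero_iff (hmono : ∀ ω, D0 ω ≤ D1 ω) :
    (∀ d0 d1 : ℕ, d0 ≤ 1 → d1 ≤ 1 →
      ∫ ω in treatmentCell D0 D1 d0 d1, f ω ∂μ = 0) ↔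
      ∫ ω in treatmentCell D0 D1 0 0, f ω ∂μ = 0 ∧
      ∫ ω in treatmentCell D0 D1 0 1, f ω ∂μ = 0 ∧
      ∫ ω in treatmentCell D0 D1 1 1, f ω ∂μ = 0 := by
  refine ⟨fun h =>
    ⟨h 0 0 zero_le_one zero_le_one, h 0 1 zero_le_one le_rfl, h 1 1 le_rfl le_rfl⟩,
    fun ⟨h00, h01, h11⟩ d0 d1 h0 h1 => ?_⟩
  have h10 : treatmentCell D0 D1 1 0 = ∅ := by
    ext ω; have := hmono ω
    simp only [treatmentCell, Set.mem_ofPred_eq, Set.mem_empty_iff_false, iff_false, not_and]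
    omega
  interval_cases d0 <;> interval_cases d1
  · exact h00
  · exact h01
  · rw [h10, Measure.restrict_empty, integral_zero_measure]
  · exact h11

theorem fullParallelTrends_iff [IsFiniteMeasure μ] (hD0 : Measurable D0) (hD1 : Measurable D1)
    (hD1le : ∀ ω, D1 ω ≤ 1) (hmono : ∀ ω, D0 ω ≤ D1 ω) (hf : Integrable f μ)
    (hN0 : 0 < μ (treatmentCell D0 D1 0 0)) (hS0 : 0 < μ {ω | D0 ω < D1 ω})
    (hfN : ∀ ω ∈ treatmentCell D0 D1 0 0, 0 ≤ f ω)
    (hfS : ∀ ω ∈ treatmentCell D0 D1 0 1, f ω ≤ 0) :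
    FullParallelTrends μ D0 D1 f ↔
      f =ᵐ[μ.restrict {ω | D0 ω * D1 ω = 0}] 0 ∧ ∫ ω, f ω ∂μ = 0 := by
  have hcell (d0 d1 : ℕ) : MeasurableSet (treatmentCell D0 D1 d0 d1) :=
    (hD0 (measurableSet_singleton d0)).inter (hD1 (measurableSet_singleton d1))
  have hS : {ω | D0 ω < D1 ω} = treatmentCell D0 D1 0 1 := by
    ext ω; have := hD1le ω
    simp only [treatmentCell, Set.mem_ofPred_eq]; omega
  have hB : {ω | D0 ω * D1 ω = 0} = treatmentCell D0 D1 0 0 ∪ treatmentCell D0 D1 0 1 := by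
    ext ω; have := hD1le ω; have := hmono ω
    simp only [treatmentCell, mul_eq_zero, Set.mem_ofPred_eq, Set.mem_union]; omega
  have hT : (treatmentCell D0 D1 0 0 ∪ treatmentCell D0 D1 0 1)ᶜ = treatmentCell D0 D1 1 1 := by
    ext ω; have := hD1le ω; have := hmono ω
    simp only [treatmentCell, Set.compl_union, Set.mem_inter_iff, Set.mem_compl_iff,
      Set.mem_ofPred_eq, not_and]
    omega
  have hdisj : Disjoint (treatmentCell D0 D1 0 0) (treatmentCell D0 D1 0 1) :=
    Set.disjoint_left.2 fun ω h h' => zero_ne_one (h.2.symm.trans h'.2)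
  rw [fullParallelTrends_iff_forall_setIntegral_eq_zero (hcell 0 0) (hcell 0 1) hN0 (hS ▸ hS0)
      hfN hfS,
    forall_setIntegral_treatmentCell_eq_zero_iff hmono,
    setIntegral_eq_zero_on_partition_iff hf (hcell 0 0) (hcell 0 1) hdisj hT hfN hfS, hB]

end ParallelTrends

section RoyModel

variable {y00 y01 y10 y11 β : ℝ} {d0 d1 : ℕ}

theorem le_one_of_eq_zero_or_eq_one {a : ℝ} (ha : a = 0 ∨ a = 1) : a ≤ 1 := by
  rcases ha with rfl | rfl <;> norm_num

theorem eq_one_of_lt_of_eq_zero_or_eq_one {a b : ℝ} (ha : a = 0 ∨ a = 1) (hb : b = 0 ∨ b = 1)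
    (hab : b < a) : a = 1 := by
  rcases ha with rfl | rfl
  · rcases hb with rfl | rfl <;> norm_num at hab
  · rfl

theorem sub_eq_zero_iff_of_eq_one_or_eq_one {a b : ℝ} (h : a = 1 ∨ b = 1) :
    a - b = 0 ↔ b = 1 ∧ a = 1 := by
  rw [sub_eq_zero]
  rcases h with rfl | rfl <;> simp [eq_comm]

/-- One individual of the model: `ytd` is the potential outcome `Y_t(d)` and `dt` the treatment
in period `t`. -/
structure RoyChoice (y00 y01 y10 y11 β : ℝ) (d0 d1 : ℕ) : Prop where
  binary : (y00 = 0 ∨ y00 = 1) ∧ (y01 = 0 ∨ y01 = 1) ∧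
    (y10 = 0 ∨ y10 = 1) ∧ (y11 = 0 ∨ y11 = 1)
  treat0 : d0 = if y01 - y00 + β * min (y11 - y10) 0 ≥ 0 then 1 else 0
  treat1 : d1 = if d0 = 1 then 1 else if y11 ≥ y10 then 1 else 0

namespace RoyChoice

theorem treat1_le_one (h : RoyChoice y00 y01 y10 y11 β d0 d1) : d1 ≤ 1 := by
  rw [h.treat1]; split_ifs <;> norm_num

theorem treat0_le_treat1 (h : RoyChoice y00 y01 y10 y11 β d0 d1) : d0 ≤ d1 := by
  have h0 := h.treat0
  rw [h.treat1]; split_ifs at h0 ⊢ <;> omega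

theorem untreated1_eq_one_of_never (h : RoyChoice y00 y01 y10 y11 β d0 d1) (h0 : d0 = 0)
    (h1 : d1 = 0) : y10 = 1 := by
  have hd1 := h.treat1
  subst h0 h1
  refine eq_one_of_lt_of_eq_zero_or_eq_one h.binary.2.2.1 h.binary.2.2.2
    (lt_of_not_ge fun hy => ?_)
  simp [hy] at hd1

theorem untreated0_eq_one_of_switch (h : RoyChoice y00 y01 y10 y11 β d0 d1) (h0 : d0 = 0)
    (h1 : d1 = 1) : y00 = 1 := by
  have hd0 := h.treat0
  have hd1 := h.treat1
  subst h0 h1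
  have hy1 : y10 ≤ y11 := by by_contra hy; simp [hy] at hd1
  rw [min_eq_right (sub_nonneg.2 hy1), mul_zero, add_zero] at hd0
  refine eq_one_of_lt_of_eq_zero_or_eq_one h.binary.1 h.binary.2.1 (lt_of_not_ge fun hy => ?_)
  simp [sub_nonneg.2 hy] at hd0

theorem trend_nonneg_of_never (h : RoyChoice y00 y01 y10 y11 β d0 d1) (h0 : d0 = 0)
    (h1 : d1 = 0) : 0 ≤ y10 - y00 := by
  rw [h.untreated1_eq_one_of_never h0 h1, sub_nonneg]
  exact le_one_of_eq_zero_or_eq_one h.binary.1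

theorem trend_nonpos_of_switch (h : RoyChoice y00 y01 y10 y11 β d0 d1) (h0 : d0 = 0)
    (h1 : d1 = 1) : y10 - y00 ≤ 0 := by
  rw [h.untreated0_eq_one_of_switch h0 h1, sub_nonpos]
  exact le_one_of_eq_zero_or_eq_one h.binary.2.2.1

theorem trend_eq_zero_iff (h : RoyChoice y00 y01 y10 y11 β d0 d1) (hd : d0 * d1 = 0) :
    y10 - y00 = 0 ↔ y00 = 1 ∧ y10 = 1 := by
  have h0 : d0 = 0 := by
    have := h.treat0_le_treat1; have := h.treat1_le_one
    rw [Nat.mul_eq_zero] at hd; omega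
  refine sub_eq_zero_iff_of_eq_one_or_eq_one ?_
  rcases Nat.le_one_iff_eq_zero_or_eq_one.1 h.treat1_le_one with h1 | h1
  · exact .inl (h.untreated1_eq_one_of_never h0 h1)
  · exact .inr (h.untreated0_eq_one_of_switch h0 h1)

end RoyChoice

end RoyModel

theorem stmt_8_general {Ω : Type*} [MeasurableSpace Ω] (μ : Measure Ω) [IsProbabilityMeasure μ]
    (Y00 Y01 Y10 Y11 : Ω → ℝ)
    (hbin : ∀ ω, (Y00 ω = 0 ∨ Y00 ω = 1) ∧ (Y01 ω = 0 ∨ Y01 ω = 1) ∧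
      (Y10 ω = 0 ∨ Y10 ω = 1) ∧ (Y11 ω = 0 ∨ Y11 ω = 1))
    (hY00 : Measurable Y00) (hY01 : Measurable Y01)
    (hY10 : Measurable Y10) (hY11 : Measurable Y11)
    (β : ℝ)
    (D0 D1 : Ω → ℕ)
    -- period-0 rule internalizing the lost option value of future no-treatment
    (hD0 : ∀ ω, D0 ω =
      if Y01 ω - Y00 ω + β * min (Y11 ω - Y10 ω) 0 ≥ 0 then 1 else 0)
    -- irreversibility and the Roy rule in period 1 when untreated in period 0
    (hD1 : ∀ ω, D1 ω = if D0 ω = 1 then 1 else (if Y11 ω ≥ Y10 ω then 1 else 0))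
    -- positive mass of never-treated and of switchers into treatment
    (hnever : 0 < μ {ω | D0 ω = 0 ∧ D1 ω = 0})
    (hswitch : 0 < μ {ω | D0 ω < D1 ω}) :
    (∃ τ : ℝ, ∀ d0 d1 : ℕ, d0 ≤ 1 → d1 ≤ 1 → 0 < μ {ω | D0 ω = d0 ∧ D1 ω = d1} →
        cexp μ {ω | D0 ω = d0 ∧ D1 ω = d1} (fun ω => Y10 ω - Y00 ω) = τ)
    ↔
    ((∫ ω, Y00 ω ∂μ = ∫ ω, Y10 ω ∂μ) ∧
      (μ[|{ω | D0 ω * D1 ω = 0}]) {ω | Y00 ω = 1 ∧ Y10 ω = 1} = 1) := by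
  have hR (ω : Ω) : RoyChoice (Y00 ω) (Y01 ω) (Y10 ω) (Y11 ω) β (D0 ω) (D1 ω) :=
    ⟨hbin ω, hD0 ω, hD1 ω⟩
  have mD0 : Measurable D0 := funext hD0 ▸
    .ite (measurableSet_le measurable_const (by fun_prop)) measurable_const measurable_const
  have mD1 : Measurable D1 := funext hD1 ▸ .ite (mD0 (measurableSet_singleton 1))
    measurable_const (.ite (measurableSet_le hY10 hY11) measurable_const measurable_const)
  have hI00 : Integrable Y00 μ := integrable_of_forall_eq_zero_or_eq_one hY00 (hbin · |>.1)
  have hI10 : Integrable Y10 μ := integrable_of_forall_eq_zero_or_eq_one hY10 (hbin · |>.2.2.1)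
  have hμB : μ {ω | D0 ω * D1 ω = 0} ≠ 0 :=
    (hnever.trans_le (measure_mono fun ω h => Nat.mul_eq_zero.2 (.inl h.1))).ne'
  refine (fullParallelTrends_iff (f := fun ω => Y10 ω - Y00 ω) mD0 mD1
    (fun ω => (hR ω).treat1_le_one) (fun ω => (hR ω).treat0_le_treat1) (hI10.sub hI00)
    hnever hswitch (fun ω h => (hR ω).trend_nonneg_of_never h.1 h.2)
    (fun ω h => (hR ω).trend_nonpos_of_switch h.1 h.2)).trans ?_
  rw [integral_sub hI10 hI00, sub_eq_zero, eq_comm, and_comm,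
    cond_eq_one_iff_ae_restrict (S := {ω | Y00 ω = 1 ∧ Y10 ω = 1}) hμB
      ((hY00 (measurableSet_singleton 1)).inter (hY10 (measurableSet_singleton 1)))]
  exact and_congr_right fun _ => Filter.eventually_congr <|
    (ae_restrict_iff' (s := {ω | D0 ω * D1 ω = 0}) ((mD0.mul mD1) (measurableSet_singleton 0))).2
      (ae_of_all _ fun ω hω => (hR ω).trend_eq_zero_iff hω)

/-- Roy model with prohibitive cost of treatment reversal: with binary outcomes, the
forward-looking period-0 rule internalizing the lost option value, irreversibility
(`D1 = 1` whenever `D0 = 1`), the Roy rule in period 1 when untreated, and positive masses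
of never-treated and switchers into treatment, full parallel trends holds iff (1) mean
untreated outcomes are stationary and (2) untreated outcomes are degenerate at 1 among the
ever-untreated. -/
theorem stmt_8 {Ω : Type*} [MeasurableSpace Ω] (μ : Measure Ω) [IsProbabilityMeasure μ]
    (Y00 Y01 Y10 Y11 : Ω → ℝ)
    (hbin : ∀ ω, (Y00 ω = 0 ∨ Y00 ω = 1) ∧ (Y01 ω = 0 ∨ Y01 ω = 1) ∧
      (Y10 ω = 0 ∨ Y10 ω = 1) ∧ (Y11 ω = 0 ∨ Y11 ω = 1))
    (hY00 : Measurable Y00) (hY01 : Measurable Y01)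
    (hY10 : Measurable Y10) (hY11 : Measurable Y11)
    (β : ℝ) (hβ0 : 0 < β) (hβ1 : β ≤ 1)
    (D0 D1 : Ω → ℕ)
    -- period-0 rule internalizing the lost option value of future no-treatment
    (hD0 : ∀ ω, D0 ω =
      if Y01 ω - Y00 ω + β * min (Y11 ω - Y10 ω) 0 ≥ 0 then 1 else 0)
    -- irreversibility and the Roy rule in period 1 when untreated in period 0
    (hD1 : ∀ ω, D1 ω = if D0 ω = 1 then 1 else (if Y11 ω ≥ Y10 ω then 1 else 0))
    -- positive mass of never-treated and of switchers into treatment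
    (hnever : 0 < μ {ω | D0 ω = 0 ∧ D1 ω = 0})
    (hswitch : 0 < μ {ω | D0 ω < D1 ω}) :
    (∃ τ : ℝ, ∀ d0 d1 : ℕ, d0 ≤ 1 → d1 ≤ 1 → 0 < μ {ω | D0 ω = d0 ∧ D1 ω = d1} →
        cexp μ {ω | D0 ω = d0 ∧ D1 ω = d1} (fun ω => Y10 ω - Y00 ω) = τ)
    ↔
    ((∫ ω, Y00 ω ∂μ = ∫ ω, Y10 ω ∂μ) ∧
      (μ[|{ω | D0 ω * D1 ω = 0}]) {ω | Y00 ω = 1 ∧ Y10 ω = 1} = 1) :=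
  stmt_8_general μ Y00 Y01 Y10 Y11 hbin hY00 hY01 hY10 hY11 β D0 D1 hD0 hD1 hnever hswitch
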